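/- Let D be a database, Σ a set of FDs, and H ⊆ D a set of facts with H ⊨ Σ. Let D′ = {f ∈ D | H ∪ {f} ⊭ Σ}. Then the set of repairs of D w.r.t. Σ that contain H equals rep(D \ D′, Σ); in particular, every repair of D \ D′ w.r.t. Σ contains H. -/
import Mathlib


open scoped Classical

/-- A fact over relation name `rel`, assigning a constant to each attribute. -/
structure DBFact (Rel Attr Const : Type*) where
  rel : Rel
  val : Attr → Const

/-- A functional dependency `rel : lhs → rhs`. -/
structure DBFD (Rel Attr : Type*) where
  rel : Rel
  lhs : Set Attr
  rhs : Set Attr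

/-- A term of a conjunctive query: a variable or a constant. -/
inductive DBTerm (Var Const : Type*) where
  | var : Var → DBTerm Var Const
  | const : Const → DBTerm Var Const

/-- An atom of a conjunctive query. -/
structure DBAtom (Rel Attr Var Const : Type*) where
  rel : Rel
  val : Attr → DBTerm Var Const

variable {Rel Attr Var Const : Type*}

/-- A database satisfies a single FD. -/
def satFD (D : Finset (DBFact Rel Attr Const)) (φ : DBFD Rel Attr) : Prop :=
  ∀ f ∈ D, ∀ g ∈ D, f.rel = φ.rel → g.rel = φ.rel →
    (∀ A ∈ φ.lhs, f.val A = g.val A) → ∀ A ∈ φ.rhs, f.val A = g.val A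

/-- A database satisfies a set of FDs. -/
def satFDs (D : Finset (DBFact Rel Attr Const)) (S : Set (DBFD Rel Attr)) : Prop :=
  ∀ φ ∈ S, satFD D φ

/-- `E` is a repair of `D` w.r.t. `S`: an inclusion-maximal consistent subset of `D`. -/
def isRepair (S : Set (DBFD Rel Attr)) (D E : Finset (DBFact Rel Attr Const)) : Prop :=
  E ⊆ D ∧ satFDs E S ∧ ∀ F, E ⊆ F → F ⊆ D → satFDs F S → F = E

/-- The set of repairs of `D` w.r.t. `S`. -/
noncomputable def rep (D : Finset (DBFact Rel Attr Const)) (S : Set (DBFD Rel Attr)) :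
    Finset (Finset (DBFact Rel Attr Const)) :=
  D.powerset.filter (fun E => isRepair S D E)

/-- Applying a homomorphism (a map from variables to constants) to an atom yields a fact. -/
def applyHom (h : Var → Const) (α : DBAtom Rel Attr Var Const) : DBFact Rel Attr Const :=
  ⟨α.rel, fun A => match α.val A with
    | DBTerm.var v => h v
    | DBTerm.const c => c⟩

/-- `D ⊨ Q`: there is a homomorphism from the CQ `Q` into `D`. -/
def entails (D : Finset (DBFact Rel Attr Const)) (Q : Finset (DBAtom Rel Attr Var Const)) :
    Prop :=
  ∃ h : Var → Const, ∀ α ∈ Q, applyHom h α ∈ D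

/-- The repairs of `D` w.r.t. `S` that entail `Q`. -/
noncomputable def repQ (D : Finset (DBFact Rel Attr Const)) (S : Set (DBFD Rel Attr))
    (Q : Finset (DBAtom Rel Attr Var Const)) : Finset (Finset (DBFact Rel Attr Const)) :=
  (rep D S).filter (fun E => entails E Q)

/-- The relative frequency of `Q` w.r.t. `D` and `S`. -/
noncomputable def rfreq (Q : Finset (DBAtom Rel Attr Var Const))
    (D : Finset (DBFact Rel Attr Const)) (S : Set (DBFD Rel Attr)) : ℚ :=
  ((repQ D S Q).card : ℚ) / ((rep D S).card : ℚ)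

/-- `Q` is self-join-free: no relation name occurs in two distinct atoms. -/
def sjf (Q : Finset (DBAtom Rel Attr Var Const)) : Prop :=
  ∀ α ∈ Q, ∀ β ∈ Q, α.rel = β.rel → α = β

/-- A canonical set of FDs with an LHS chain, given by the chain
`R : X₁ → Y₁, …, R : Xₙ → Yₙ` for each relation name `R`, with
`X₁ ⊊ X₂ ⊊ ⋯ ⊊ Xₙ`, each `Y_i` nonempty, `X_i ∩ Y_j = ∅` for all `i,j`,
and `Y_i ∩ Y_j = ∅` for `i ≠ j`. -/
def canonicalChain (chain : Rel → List (Set Attr × Set Attr)) : Prop :=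
  ∀ R : Rel,
    ((chain R).Pairwise fun a b => a.1 ⊂ b.1) ∧
    (∀ xy ∈ chain R, (xy.2 : Set Attr).Nonempty) ∧
    (∀ xy ∈ chain R, ∀ xy' ∈ chain R, xy.1 ∩ xy'.2 = ∅) ∧
    ((chain R).Pairwise fun a b => a.2 ∩ b.2 = ∅)

/-- The set of FDs induced by a chain. -/
def chainFDs (chain : Rel → List (Set Attr × Set Attr)) : Set (DBFD Rel Attr) :=
  {φ | ∃ xy ∈ chain φ.rel, φ.lhs = xy.1 ∧ φ.rhs = xy.2}

/-- The `i`-th FD of the chain `L` has some attribute carrying a variable in atom `α`. -/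
def chainVarAt (L : List (Set Attr × Set Attr)) (α : DBAtom Rel Attr Var Const) (i : ℕ) :
    Prop :=
  ∃ xy, L[i]? = some xy ∧ ∃ A ∈ xy.1 ∪ xy.2, ∃ v, α.val A = DBTerm.var v

/-- The index of the primary FD of the chain `L` w.r.t. the atom `α` (if it exists):
the first FD some of whose attributes carries a variable in `α`. -/
noncomputable def primaryIdx (L : List (Set Attr × Set Attr))
    (α : DBAtom Rel Attr Var Const) : Option ℕ :=
  if h : ∃ i, chainVarAt L α i then some (Nat.find h) else none

/-- The primary FD of the chain `L` w.r.t. the atom `α` (if it exists). -/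
noncomputable def primaryFD (L : List (Set Attr × Set Attr))
    (α : DBAtom Rel Attr Var Const) : Option (Set Attr × Set Attr) :=
  (primaryIdx L α).bind fun i => L[i]?

/-- The primary prefix of the chain `L` w.r.t. the atom `α`: the FDs strictly before the
primary FD, or the whole chain if there is no primary FD. -/
noncomputable def primaryPrefix (L : List (Set Attr × Set Attr))
    (α : DBAtom Rel Attr Var Const) : List (Set Attr × Set Attr) :=
  L.take ((primaryIdx L α).getD L.length)

/-- The primary-lhs positions (attributes) of the atom `α` w.r.t. the chain `L`. -/
noncomputable def primaryLhs (L : List (Set Attr × Set Attr))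
    (α : DBAtom Rel Attr Var Const) : Set Attr :=
  match primaryFD L α with
  | some xy => xy.1
  | none => Set.univ

/-- The variables of `α` occurring at primary-lhs positions. -/
noncomputable def pvar (L : List (Set Attr × Set Attr))
    (α : DBAtom Rel Attr Var Const) : Set Var :=
  {v | ∃ A ∈ primaryLhs L α, α.val A = DBTerm.var v}

/-- A liaison variable of `Q`: a variable with more than one occurrence in `Q`. -/
def liaison (Q : Finset (DBAtom Rel Attr Var Const)) (v : Var) : Prop :=
  ∃ α ∈ Q, ∃ β ∈ Q, ∃ A B, α.val A = DBTerm.var v ∧ β.val B = DBTerm.var v ∧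
    (α ≠ β ∨ A ≠ B)

/-- The complex part `comp(Q,Σ)` of `Q` w.r.t. the chain. -/
noncomputable def compPart (chain : Rel → List (Set Attr × Set Attr))
    (Q : Finset (DBAtom Rel Attr Var Const)) : Finset (DBAtom Rel Attr Var Const) :=
  Q.filter fun α => ∃ A, A ∉ primaryLhs (chain α.rel) α ∧
    ((∃ c, α.val A = DBTerm.const c) ∨ ∃ v, α.val A = DBTerm.var v ∧ liaison Q v) ∧
    ∀ xy ∈ primaryPrefix (chain α.rel) α, A ∉ xy.1 ∪ xy.2

/-- The fact `f` agrees with the atom `α` at attribute `A`, i.e. `α[A]` is the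
constant `f[A]`. -/
def agreesAt (f : DBFact Rel Attr Const) (α : DBAtom Rel Attr Var Const) (A : Attr) : Prop :=
  α.val A = DBTerm.const (f.val A)

/-- `D_conf^{Σ,Q}`: the facts of `D` conflicting with `Q` via an FD of the primary prefix. -/
noncomputable def dconf (chain : Rel → List (Set Attr × Set Attr))
    (Q : Finset (DBAtom Rel Attr Var Const)) (D : Finset (DBFact Rel Attr Const)) :
    Finset (DBFact Rel Attr Const) :=
  D.filter fun f => ∃ α ∈ Q, α.rel = f.rel ∧
    ∃ xy ∈ primaryPrefix (chain α.rel) α,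
      (∀ A ∈ xy.1, agreesAt f α A) ∧ ∃ B ∈ xy.2, ¬ agreesAt f α B

/-- `D_ind^{Σ,Q}`: the facts of `D \ D_conf^{Σ,Q}` disagreeing with `Q` on the lhs of an
FD of the primary prefix. -/
noncomputable def dind (chain : Rel → List (Set Attr × Set Attr))
    (Q : Finset (DBAtom Rel Attr Var Const)) (D : Finset (DBFact Rel Attr Const)) :
    Finset (DBFact Rel Attr Const) :=
  (D \ dconf chain Q D).filter fun f => ∃ α ∈ Q, α.rel = f.rel ∧
    ∃ xy ∈ primaryPrefix (chain α.rel) α, ∃ A ∈ xy.1, ¬ agreesAt f α A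

/-- The active domain of `D`: the constants occurring in `D`. -/
noncomputable def adom [Fintype Attr] (D : Finset (DBFact Rel Attr Const)) : Finset Const :=
  D.biUnion fun f => Finset.univ.image f.val

/-- Substituting a constant for a variable in a term. -/
noncomputable def substTerm (x : Var) (c : Const) : DBTerm Var Const → DBTerm Var Const
  | DBTerm.var v => if v = x then DBTerm.const c else DBTerm.var v
  | DBTerm.const d => DBTerm.const d

/-- Substituting a constant for a variable in an atom. -/
noncomputable def substAtom (x : Var) (c : Const) (α : DBAtom Rel Attr Var Const) :
    DBAtom Rel Attr Var Const :=
  ⟨α.rel, fun A => substTerm x c (α.val A)⟩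

/-- `Q_{x↦c}`: the query obtained from `Q` by replacing the variable `x` with `c`. -/
noncomputable def substQ (x : Var) (c : Const) (Q : Finset (DBAtom Rel Attr Var Const)) :
    Finset (DBAtom Rel Attr Var Const) :=
  Q.image (substAtom x c)

/-- The variables occurring in `Q`. -/
def qvars (Q : Finset (DBAtom Rel Attr Var Const)) : Set Var :=
  {v | ∃ α ∈ Q, ∃ A, α.val A = DBTerm.var v}

/-- `S` has an LHS chain: the left-hand sides of FDs over the same relation are
⊆-comparable. -/
def hasLHSChain (S : Set (DBFD Rel Attr)) : Prop :=
  ∀ φ ∈ S, ∀ ψ ∈ S, φ.rel = ψ.rel → φ.lhs ⊆ ψ.lhs ∨ ψ.lhs ⊆ φ.lhs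


lemma satFDs_mono' {Rel Attr Const : Type*} {E F : Finset (DBFact Rel Attr Const)}
    {S : Set (DBFD Rel Attr)} (h : E ⊆ F) (hF : satFDs F S) : satFDs E S :=
  fun φ hφ f hf g hg => hF φ hφ f (h hf) g (h hg)

/-- For `H ⊆ D` with `H ⊨ S` and `D' = {f ∈ D | H ∪ {f} ⊭ S}`: the repairs of `D`
w.r.t. `S` containing `H` are exactly the repairs of `D \ D'`; in particular every
repair of `D \ D'` contains `H`. -/
theorem stmt_18 {Rel Attr Const : Type*} (S : Set (DBFD Rel Attr))
    (D H : Finset (DBFact Rel Attr Const)) (hH : H ⊆ D) (hHsat : satFDs H S) :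
    ((rep D S).filter (fun E => H ⊆ E) =
      rep (D \ D.filter fun f => ¬ satFDs (insert f H) S) S) ∧
    ∀ E ∈ rep (D \ D.filter fun f => ¬ satFDs (insert f H) S) S, H ⊆ E := by
  classical
  set D' := D.filter (fun f => ¬ satFDs (insert f H) S) with hD'
  set D2 := D \ D' with hD2
  have hHD2 : H ⊆ D2 := by
    intro f hf
    rw [hD2, Finset.mem_sdiff]
    refine ⟨hH hf, ?_⟩
    rw [hD', Finset.mem_filter]
    rintro ⟨-, hbad⟩
    exact hbad (by rwa [Finset.insert_eq_self.2 hf])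
  have hD2D : D2 ⊆ D := Finset.sdiff_subset
  -- any consistent subset of D containing H is a subset of D2
  have sub : ∀ F : Finset (DBFact Rel Attr Const),
      H ⊆ F → F ⊆ D → satFDs F S → F ⊆ D2 := by
    intro F hHF hFD hFsat f hf
    rw [hD2, Finset.mem_sdiff]
    refine ⟨hFD hf, ?_⟩
    rw [hD', Finset.mem_filter]
    rintro ⟨-, hbad⟩
    exact hbad (satFDs_mono' (Finset.insert_subset hf hHF) hFsat)
  -- key: any maximal consistent subset of D2 contains H
  have key : ∀ E : Finset (DBFact Rel Attr Const), E ⊆ D2 → satFDs E S →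
      (∀ F, E ⊆ F → F ⊆ D2 → satFDs F S → F = E) → H ⊆ E := by
    intro E hED2 hEsat hmax f hfH
    by_contra hfE
    have hins : ¬ satFDs (insert f E) S := by
      intro hsat
      have heq := hmax (insert f E) (Finset.subset_insert _ _)
        (Finset.insert_subset (hHD2 hfH) hED2) hsat
      exact hfE (heq ▸ Finset.mem_insert_self f E)
    unfold satFDs satFD at hins
    push_neg at hins
    obtain ⟨φ, hφS, a, ha, b, hb, hra, hrb, hlhs, B, hB, hne⟩ := hins
    have hD2sat : ∀ g ∈ E, satFDs (insert g H) S := by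
      intro g hg
      have hg2 := hED2 hg
      rw [hD2, Finset.mem_sdiff, hD', Finset.mem_filter] at hg2
      by_contra hcon
      exact hg2.2 ⟨hg2.1, hcon⟩
    rcases Finset.mem_insert.1 ha with rfl | haE
    · rcases Finset.mem_insert.1 hb with rfl | hbE
      · exact hne rfl
      · exact hne (hD2sat b hbE φ hφS a (Finset.mem_insert_of_mem hfH) b
          (Finset.mem_insert_self _ _) hra hrb hlhs B hB)
    · rcases Finset.mem_insert.1 hb with rfl | hbE
      · exact hne (hD2sat a haE φ hφS a (Finset.mem_insert_self _ _) b
          (Finset.mem_insert_of_mem hfH) hra hrb hlhs B hB)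
      · exact hne (hEsat φ hφS a haE b hbE hra hrb hlhs B hB)
  constructor
  · ext E
    simp only [rep, Finset.mem_filter, Finset.mem_powerset]
    constructor
    · rintro ⟨⟨hED, hrep⟩, hHE⟩
      obtain ⟨hED', hEsat, hmax⟩ := hrep
      have hED2 : E ⊆ D2 := sub E hHE hED hEsat
      exact ⟨hED2, hED2, hEsat, fun F hEF hFD2 hFsat =>
        hmax F hEF (hFD2.trans hD2D) hFsat⟩
    · rintro ⟨hED2, hrep⟩
      obtain ⟨hED2', hEsat, hmax⟩ := hrep
      have hHE : H ⊆ E := key E hED2 hEsat hmax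
      refine ⟨⟨hED2.trans hD2D, hED2.trans hD2D, hEsat, ?_⟩, hHE⟩
      intro F hEF hFD hFsat
      exact hmax F hEF (sub F (hHE.trans hEF) hFD hFsat) hFsat
  · intro E hE
    rw [rep, Finset.mem_filter, Finset.mem_powerset] at hE
    obtain ⟨hED2, hED2', hEsat, hmax⟩ := hE
    exact key E hED2 hEsat hmax
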